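/- arXiv:math/9902092 — 2 statements merged into one kernel-verified Lean document; each statement's English description precedes it below -/
import Mathlib

section
/- Let L be a lattice containing the hyperbolic plane H as a direct summand, and let x ∈ H ⊂ L be a primitive isotropic element (⟨x,x⟩ = 0). Then for any z ∈ L with ⟨z,x⟩ = 1, the element z is equivalent under O(L) to the element of H with coordinates (⟨z,z⟩/2 appropriately placed, i.e. the element a·e + f where e,f are the standard basis of H with ⟨e,e⟩=⟨f,f⟩=0, ⟨e,f⟩=1, and 2a = ⟨z,z⟩). -/
/-!
Write `z = a e + b f + w` with `w ∈ W`. Pairing with `e` gives `b = 1`, and evenness gives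
`⟨w, w⟩ = 2q`. The Eichler transvection
`E(v) = v - ⟨v, e⟩ w + (⟨v, w⟩ - q ⟨v, e⟩) e`
attached to the isotropic vector `e` and to `w ⊥ e` is an isometry, with inverse the transvection
attached to `-w`, and it sends `z` to `(a + q) e + f`, where `2(a + q) = ⟨z, z⟩`.
-/

namespace LinearMap.BilinForm

variable {R M : Type*} [CommRing R] [AddCommGroup M] [Module R M]
  (B : LinearMap.BilinForm R M) (e f w : M) (q : R)

def eichlerMap : M →ₗ[R] M :=
  LinearMap.id - (B.flip e).smulRight w + (B.flip w - q • B.flip e).smulRight e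

@[simp]
theorem eichlerMap_apply (v : M) :
    B.eichlerMap e w q v = v - B v e • w + (B v w - q * B v e) • e := by
  simp [eichlerMap]

variable {B e f w q}

theorem eichlerMap_apply_left (v u : M) :
    B (B.eichlerMap e w q v) u = B v u - B v e * B w u + (B v w - q * B v e) * B e u := by
  simp

theorem eichlerMap_apply_right (v u : M) :
    B u (B.eichlerMap e w q v) = B u v - B v e * B u w + (B v w - q * B v e) * B u e := by
  simp

theorem eichlerMap_eichlerMap_neg (hB : ∀ x y : M, B x y = B y x) (he : B e e = 0)
    (hew : B e w = 0) (hq : B w w = q + q) (v : M) :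
    B.eichlerMap e (-w) q (B.eichlerMap e w q v) = v := by
  have hwe : B w e = 0 := by rw [hB, hew]
  have hEe : B (B.eichlerMap e w q v) e = B v e := by
    rw [eichlerMap_apply_left, hwe, he]; ring
  have hEw : B (B.eichlerMap e w q v) w = B v w - (q + q) * B v e := by
    rw [eichlerMap_apply_left, hq, hew]; ring
  rw [eichlerMap_apply B e (-w), map_neg, hEe, hEw, eichlerMap_apply]
  module

theorem eichlerMap_isometry (hB : ∀ x y : M, B x y = B y x) (he : B e e = 0)
    (hew : B e w = 0) (hq : B w w = q + q) (u v : M) :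
    B (B.eichlerMap e w q u) (B.eichlerMap e w q v) = B u v := by
  rw [eichlerMap_apply_right, eichlerMap_apply_left, eichlerMap_apply_left, eichlerMap_apply_left,
    hB w v, hB e v, hB w e, hew, he, hq]
  ring

def eichlerEquiv (hB : ∀ x y : M, B x y = B y x) (he : B e e = 0) (hew : B e w = 0)
    (hq : B w w = q + q) : M ≃ₗ[R] M :=
  have hew' : B e (-w) = 0 := by rw [map_neg, hew, neg_zero]
  have hq' : B (-w) (-w) = q + q := by rw [map_neg, map_neg, LinearMap.neg_apply, neg_neg, hq]
  LinearEquiv.ofLinearMap (B.eichlerMap e w q) (B.eichlerMap e (-w) q)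
    (LinearMap.ext fun v => by
      simpa using eichlerMap_eichlerMap_neg hB he hew' hq' v)
    (LinearMap.ext fun v => eichlerMap_eichlerMap_neg hB he hew hq v)

theorem eichlerMap_smul_add_add (hB : ∀ x y : M, B x y = B y x) (he : B e e = 0)
    (hef : B e f = 1) (hew : B e w = 0) (hfw : B f w = 0) (hq : B w w = q + q) (a : R) :
    B.eichlerMap e w q (a • e + f + w) = (a + q) • e + f := by
  have hze : B (a • e + f + w) e = 1 := by
    simp [hB f e, hB w e, he, hef, hew]
  have hzw : B (a • e + f + w) w = q + q := by
    simp [hew, hfw, hq]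
  rw [eichlerMap_apply, hze, hzw]
  module

end LinearMap.BilinForm

open LinearMap.BilinForm in
/-- If an even lattice L has a hyperbolic plane H = ⟨e,f⟩ as an
orthogonal direct summand, then any z ∈ L with ⟨z,e⟩ = 1 is equivalent under
O(L) to the element a•e + f of H where 2a = ⟨z,z⟩. -/
theorem stmt_1 (L : Type) [AddCommGroup L] [Module ℤ L]
    (B : L →ₗ[ℤ] L →ₗ[ℤ] ℤ)
    (hsymm : ∀ x y : L, B x y = B y x)
    (e f : L)
    (he : B e e = 0) (hf : B f f = 0) (hef : B e f = 1)
    (W : Submodule ℤ L)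
    (horth : ∀ w ∈ W, B e w = 0 ∧ B f w = 0)
    (hsplit : ∀ x : L, ∃ (a b : ℤ) (w : L), w ∈ W ∧ x = a • e + b • f + w)
    (heven : ∀ v : L, Even (B v v))
    (z : L) (hz : B z e = 1) :
    ∃ (a : ℤ) (g : L ≃ₗ[ℤ] L), 2 * a = B z z ∧
      (∀ u v : L, B (g u) (g v) = B u v) ∧ g z = a • e + f := by
  -- `a • e` in the statement is `zsmul`; identify the given `ℤ`-module structure with it.
  obtain rfl : ‹Module ℤ L› = AddCommGroup.toIntModule L := Subsingleton.elim _ _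
  obtain ⟨a, b, w, hw, rfl⟩ := hsplit z
  obtain ⟨hew, hfw⟩ := horth w hw
  obtain ⟨q, hq⟩ := heven w
  obtain rfl : b = 1 := by simpa [hsymm f e, hsymm w e, he, hef, hew] using hz
  rw [one_smul]
  refine ⟨a + q, eichlerEquiv hsymm he hew hq, ?_, ?_, ?_⟩
  · simp only [map_add, map_smul, LinearMap.add_apply, LinearMap.smul_apply, smul_eq_mul,
      hsymm f e, hsymm w e, hsymm w f, he, hf, hef, hew, hfw, hq]
    ring
  · exact eichlerMap_isometry hsymm he hew hq
  · exact eichlerMap_smul_add_add hsymm he hef hew hfw hq a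
end

section
/- Let G be a group acting faithfully on a free abelian group of finite rank n (i.e. G embeds into GL_n(Z)). If every element of G has finite order, then G is finite, with order bounded by a constant depending only on n (for instance, |G| ≤ |GL_n(Z/3Z)|). -/
/-!
Reduction modulo 3 is injective on the torsion elements of `GL_n(ℤ)`. Suppose `A ≡ 1 mod 3` and
`A ^ p = 1` with `p` prime, and write `A = 1 + 3 ^ (k + 1) • C`. Expanding `A ^ p = 1` shows
`3 ∣ C`: for `p ≠ 3` the linear term `p • 3 ^ (k + 1) • C` is the only one not divisible by
`3 ^ (k + 2)`, while for `p = 3` the full cube has to be expanded. Hence `A - 1` is divisible by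
every power of `3`, so `A = 1`; an element of finite order in the kernel has a power of prime
order in the kernel, so it is trivial too. A torsion subgroup of `GL_n(ℤ)` thus embeds into
`GL_n(ℤ/3ℤ)`.
-/

open Matrix

theorem exists_one_add_pow_eq_one_add_nsmul_add_mul_self_mul {R : Type*} [Ring R] (x : R)
    (p : ℕ) : ∃ S : R, (1 + x) ^ p = 1 + p • x + x * x * S := by
  induction p with
  | zero => exact ⟨0, by simp⟩
  | succ p ih =>
    obtain ⟨S, hS⟩ := ih
    refine ⟨p • 1 + S + S * x, ?_⟩
    rw [pow_succ, hS]
    simp only [add_mul, mul_add, mul_one, one_mul, succ_nsmul, smul_mul_assoc, mul_smul_comm,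
      mul_assoc]
    abel

theorem exists_eq_nsmul_of_coprime {M : Type*} [AddCommGroup M] {p q : ℕ} (hpq : p.Coprime q)
    {c e : M} (h : p • c = q • e) : ∃ d, c = q • d := by
  obtain ⟨a, b, hab⟩ := Nat.isCoprime_iff_coprime.2 hpq
  exact ⟨a • e + b • c, by linear_combination (norm := module) a • h - hab • c⟩

section TorsionFreeRing

variable {R : Type*} [Ring R] [IsAddTorsionFree R]

theorem exists_eq_nsmul_of_one_add_pow_eq_one {p q : ℕ} (hq : q ≠ 0) (hpq : p.Coprime q)
    {c : R} {k : ℕ} (h : (1 + q ^ (k + 1) • c) ^ p = 1) : ∃ d, c = q • d := by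
  obtain ⟨S, hS⟩ := exists_one_add_pow_eq_one_add_nsmul_add_mul_self_mul (q ^ (k + 1) • c) p
  rw [h, smul_mul_smul_comm, smul_mul_assoc] at hS
  have : q ^ (k + 1) • (p • c) = q ^ (k + 1) • (q • -(q ^ k • (c * c * S))) := by
    linear_combination (norm := module) -hS
  exact exists_eq_nsmul_of_coprime hpq (nsmul_right_injective (pow_ne_zero _ hq) this)

theorem exists_eq_three_nsmul_of_one_add_pow_three_eq_one {c : R} {k : ℕ}
    (h : (1 + 3 ^ (k + 1) • c) ^ 3 = 1) : ∃ d, c = 3 • d := by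
  have expand : (1 + (3 * 3 ^ k) • c) ^ 3 =
      1 + (9 * 3 ^ k) • (c + 3 • (3 ^ k • (c * c) + (3 ^ k) ^ 2 • (c * c * c))) := by
    simp only [pow_succ, pow_zero, one_mul, add_mul, mul_add, mul_one, smul_mul_assoc,
      mul_smul_comm, mul_assoc]
    module
  rw [pow_succ' 3 k, expand, add_eq_left, ← nsmul_zero (9 * 3 ^ k)] at h
  exact ⟨-(3 ^ k • (c * c) + (3 ^ k) ^ 2 • (c * c * c)),
    by rw [smul_neg, eq_neg_iff_add_eq_zero]; exact nsmul_right_injective (by positivity) h⟩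

theorem exists_eq_three_nsmul_of_one_add_pow_prime_eq_one {p : ℕ} (hp : p.Prime) {c : R} {k : ℕ}
    (h : (1 + 3 ^ (k + 1) • c) ^ p = 1) : ∃ d, c = 3 • d := by
  rcases eq_or_ne p 3 with rfl | hp3
  · exact exists_eq_three_nsmul_of_one_add_pow_three_eq_one h
  · exact exists_eq_nsmul_of_one_add_pow_eq_one three_ne_zero
      ((Nat.coprime_primes hp Nat.prime_three).2 hp3) h

theorem exists_eq_one_add_three_pow_nsmul {p : ℕ} (hp : p.Prime) {a : R} (ha : a ^ p = 1)
    (h : ∃ c, a = 1 + 3 • c) : ∀ t, ∃ c, a = 1 + 3 ^ t • c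
  | 0 => ⟨a - 1, by simp⟩
  | 1 => by simpa using h
  | t + 2 => by
    obtain ⟨c, rfl⟩ := exists_eq_one_add_three_pow_nsmul hp ha h (t + 1)
    obtain ⟨d, rfl⟩ := exists_eq_three_nsmul_of_one_add_pow_prime_eq_one hp ha
    exact ⟨d, by rw [smul_smul, ← pow_succ]⟩

end TorsionFreeRing

theorem Submonoid.eq_one_of_isOfFinOrder {G : Type*} [Monoid G] {S : Submonoid G}
    (hS : ∀ g ∈ S, ∀ p : ℕ, p.Prime → g ^ p = 1 → g = 1) {g : G} (hg : g ∈ S)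
    (hfin : IsOfFinOrder g) : g = 1 := by
  by_contra hne
  obtain ⟨p, hp, hpg⟩ := Nat.exists_prime_and_dvd (mt orderOf_eq_one_iff.1 hne)
  have hord : orderOf (g ^ (orderOf g / p)) = p :=
    orderOf_pow_orderOf_div hfin.orderOf_pos.ne' hpg
  have := hS _ (pow_mem hg _) p hp (hord ▸ pow_orderOf_eq_one _)
  exact hp.one_lt.ne' (hord ▸ orderOf_eq_one_iff.2 this)

namespace Matrix

instance instIsAddTorsionFree {m n α : Type*} [AddMonoid α] [IsAddTorsionFree α] :
    IsAddTorsionFree (Matrix m n α) :=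
  inferInstanceAs (IsAddTorsionFree (m → n → α))

theorem eq_zero_of_forall_exists_eq_pow_nsmul {m n : Type*} {q : ℕ} (hq : q ≠ 1)
    {M : Matrix m n ℤ} (h : ∀ t, ∃ C, M = q ^ t • C) : M = 0 := by
  ext i j
  by_contra hne
  refine FiniteMultiplicity.not_iff_forall.2 (fun t => ?_)
    (Int.finiteMultiplicity_iff (a := q) |>.2 ⟨by simpa using hq, hne⟩)
  obtain ⟨C, rfl⟩ := h t
  exact ⟨C i j, by simp⟩

theorem exists_eq_one_add_nsmul_of_map_eq_one {ι : Type*} [DecidableEq ι] {q : ℕ}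
    {A : Matrix ι ι ℤ} (h : A.map (Int.cast : ℤ → ZMod q) = 1) : ∃ C, A = 1 + q • C := by
  have hdvd (i j : ι) : (q : ℤ) ∣ (A - 1) i j := by
    rw [← ZMod.intCast_zmod_eq_zero_iff_dvd]
    have := congr_fun₂ h i j
    simp_all [Matrix.one_apply]
  refine ⟨Matrix.of fun i j => (A - 1) i j / q, ?_⟩
  ext i j
  rw [add_apply, smul_apply, of_apply, nsmul_eq_mul, Int.mul_ediv_cancel' (hdvd i j), sub_apply,
    add_sub_cancel]

theorem eq_one_of_pow_prime_eq_one_of_map_eq_one {ι : Type*} [Fintype ι] [DecidableEq ι]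
    {A : Matrix ι ι ℤ} {p : ℕ} (hp : p.Prime) (hA : A ^ p = 1)
    (h : A.map (Int.cast : ℤ → ZMod 3) = 1) : A = 1 :=
  sub_eq_zero.1 <| eq_zero_of_forall_exists_eq_pow_nsmul (q := 3) (by norm_num) fun t =>
    (exists_eq_one_add_three_pow_nsmul hp hA (exists_eq_one_add_nsmul_of_map_eq_one h) t).imp
      fun C hC => by rw [hC, add_sub_cancel_left]

theorem GeneralLinearGroup.eq_one_of_isOfFinOrder_of_map_eq_one {ι : Type*} [Fintype ι]
    [DecidableEq ι] {u : GL ι ℤ} (hu : IsOfFinOrder u)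
    (h : GeneralLinearGroup.map (Int.castRingHom (ZMod 3)) u = 1) : u = 1 := by
  refine Submonoid.eq_one_of_isOfFinOrder (fun g hg p hp hgp => ?_) (MonoidHom.mem_mker.2 h) hu
  exact Units.ext <| eq_one_of_pow_prime_eq_one_of_map_eq_one hp
    (by rw [← Units.val_pow_eq_pow_val, hgp, Units.val_one])
    (congr_arg Units.val (MonoidHom.mem_mker.1 hg))

end Matrix

/-- A group embedding into GL_n(ℤ) all of whose elements have finite
order is finite, with order bounded by |GL_n(ℤ/3ℤ)|. -/
theorem stmt_5 (n : ℕ) (G : Type) [Group G]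
    (ρ : G →* Matrix.GeneralLinearGroup (Fin n) ℤ)
    (hinj : Function.Injective ρ)
    (htors : ∀ g : G, IsOfFinOrder g) :
    Finite G ∧ Nat.card G ≤ Nat.card (Matrix.GeneralLinearGroup (Fin n) (ZMod 3)) := by
  have hred : Function.Injective ((GeneralLinearGroup.map (Int.castRingHom (ZMod 3))).comp ρ) :=
    (injective_iff_map_eq_one _).2 fun g hg => hinj <| by
      rw [map_one]
      exact GeneralLinearGroup.eq_one_of_isOfFinOrder_of_map_eq_one (ρ.isOfFinOrder (htors g)) hg
  exact ⟨Finite.of_injective _ hred, Nat.card_le_card_of_injective _ hred⟩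
end
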